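/- arXiv:1410.2798 — 5 statements merged into one kernel-verified Lean document; each statement's English description precedes it below -/
import Mathlib

section
/- Let A be a gauge field on the cube B such that dA(p) = 0 for every plaquette p contained in B and (τ⁰A)(x) = 0 for every x ∈ B. Then A(b) = 0 for every bond b in B. -/
open Finset

noncomputable section

/-- Points of the lattice `ℤ³`. -/
abbrev Pt : Type := Fin 3 → ℤ

/-- The standard unit vector `e_μ`. -/
def unitVec (μ : Fin 3) : Pt := fun i => if i = μ then 1 else 0

/-- Membership in the cube `B = {x : |x i| ≤ (L-1)/2}` (for odd `L`). -/
def inCube (L : ℤ) (x : Pt) : Prop := ∀ i, |x i| ≤ (L - 1) / 2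

/-- Shift a point by `k` steps in direction `μ`. -/
def shiftPt (z : Pt) (μ : Fin 3) (k : ℤ) : Pt := fun i => if i = μ then z i + k else z i

/-- The sum of the gauge field `A` along the straight lattice path from `z` to `z + t·e_μ`. -/
def seg (A : Pt → Pt → ℝ) (z : Pt) (μ : Fin 3) (t : ℤ) : ℝ :=
  if 0 ≤ t then ∑ j ∈ Finset.range t.toNat, A (shiftPt z μ (j : ℤ)) (shiftPt z μ ((j : ℤ) + 1))
  else ∑ j ∈ Finset.range (-t).toNat, A (shiftPt z μ (-(j : ℤ))) (shiftPt z μ (-(j : ℤ) - 1))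

/-- The field strength `dA` on the plaquette based at `x`, spanned by `e_μ, e_ν`. -/
def plaq (A : Pt → Pt → ℝ) (x : Pt) (μ ν : Fin 3) : ℝ :=
  A x (x + unitVec μ) + A (x + unitVec μ) (x + unitVec μ + unitVec ν)
    + A (x + unitVec μ + unitVec ν) (x + unitVec ν) + A (x + unitVec ν) x

/-- The corner of the rectilinear path `Γ^π_{yx}` reached after the first `m` coordinate
moves: coordinates `π 0, …, π (m-1)` are already at their final values. -/
def interPt (y x : Pt) (π : Equiv.Perm (Fin 3)) (m : ℕ) : Pt :=
  fun i => if ((π.symm i : Fin 3) : ℕ) < m then x i else y i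

/-- `A(Γ^π_{yx})`: the sum of `A` along the rectilinear path from `y` to `x` which moves
the coordinates to their final values in the order `π 0, π 1, π 2`. -/
def gammaSum (A : Pt → Pt → ℝ) (π : Equiv.Perm (Fin 3)) (y x : Pt) : ℝ :=
  ∑ m : Fin 3, seg A (interPt y x π (m : ℕ)) (π m) (x (π m) - y (π m))

/-- `(τ⁰A)(x) = A(Γ_{0x})`, for the identity ordering of coordinates. -/
def tau0 (A : Pt → Pt → ℝ) (x : Pt) : ℝ := gammaSum A 1 0 x

/-- `(τA)(x) = (1/6) Σ_π A(Γ^π_{0x})`, averaged over the `3! = 6` permutations. -/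
def tau (A : Pt → Pt → ℝ) (x : Pt) : ℝ :=
  (1 / 6) * ∑ π : Equiv.Perm (Fin 3), gammaSum A π 0 x

/-!
The paths `Γ_{0x}` form a spanning tree of `B` (coordinates indexed by `Fin 3`): every bond in direction `e₂`, the bonds in
direction `e₁` in the plane `x₂ = 0`, and the bonds in direction `e₀` on the axis
`x₁ = x₂ = 0`. Along a tree bond `τ⁰A` grows by the field on that bond, so `τ⁰A = 0` kills `A`
on the tree. Any other bond in direction `μ` lies off the hyperplane `x_ν = 0` for some `ν > μ`;
the plaquette joining it to its neighbour one step closer to that hyperplane has both `ν`-sides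
already zero, so flatness carries the value of `A` down to a bond that is known to vanish.
-/

lemma unitVec_apply_self (μ : Fin 3) : unitVec μ μ = 1 := if_pos rfl

lemma unitVec_apply_of_ne {μ i : Fin 3} (h : i ≠ μ) : unitVec μ i = 0 := if_neg h

lemma seg_zero (A : Pt → Pt → ℝ) (z : Pt) (μ : Fin 3) : seg A z μ 0 = 0 := by
  simp [seg]

lemma seg_add_one (A : Pt → Pt → ℝ) (hA : ∀ x x', A x x' = - A x' x) (z : Pt) (μ : Fin 3)
    (t : ℤ) : seg A z μ (t + 1) = seg A z μ t + A (shiftPt z μ t) (shiftPt z μ (t + 1)) := by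
  rcases le_or_gt 0 t with ht | ht
  · rw [seg, seg, if_pos (by omega), if_pos ht, show (t + 1).toNat = t.toNat + 1 by omega,
      sum_range_succ, Int.toNat_of_nonneg ht]
  · obtain ⟨n, rfl⟩ : ∃ n : ℕ, t = -(n + 1 : ℕ) := ⟨(-t - 1).toNat, by omega⟩
    have hseg : ∀ k : ℕ, seg A z μ (-k) =
        ∑ j ∈ range k, A (shiftPt z μ (-(j : ℤ))) (shiftPt z μ (-(j : ℤ) - 1)) := by
      intro k
      rcases k with _ | k
      · simp [seg]
      · rw [seg, if_neg (by omega), neg_neg, Int.toNat_natCast]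
    rw [show -((n + 1 : ℕ) : ℤ) + 1 = -(n : ℤ) by push_cast; ring, hseg, hseg, sum_range_succ,
      hA (shiftPt z μ _), show -(n : ℤ) - 1 = -((n + 1 : ℕ) : ℤ) by push_cast; ring]
    ring

lemma tau0_eq_sum (A : Pt → Pt → ℝ) (x : Pt) :
    tau0 A x = ∑ m : Fin 3, seg A (fun i => if i < m then x i else 0) m (x m) := by
  simp only [tau0, gammaSum, Equiv.Perm.one_apply, Pi.zero_apply, sub_zero]
  rfl

/-- Stepping along a bond of the axial tree changes `τ⁰A` by the field on that bond. -/
lemma tau0_add_unitVec (A : Pt → Pt → ℝ) (hA : ∀ x x', A x x' = - A x' x) (μ : Fin 3)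
    (x : Pt) (hx : ∀ i, μ < i → x i = 0) :
    tau0 A (x + unitVec μ) = tau0 A x + A x (x + unitVec μ) := by
  have hcorner : ∀ m, m ≤ μ →
      (fun i => if i < m then (x + unitVec μ) i else 0) = fun i => if i < m then x i else 0 := by
    intro m hm
    funext i
    split_ifs with hi
    · simp [unitVec, (show i ≠ μ by omega)]
    · rfl
  have hterm : ∀ m : Fin 3,
      seg A (fun i => if i < m then (x + unitVec μ) i else 0) m ((x + unitVec μ) m) =
        seg A (fun i => if i < m then x i else 0) m (x m) +
          if m = μ then A x (x + unitVec μ) else 0 := by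
    intro m
    rcases lt_trichotomy m μ with hm | rfl | hm
    · rw [hcorner m hm.le]
      simp [unitVec, hm.ne]
    · have hshift : ∀ k : ℤ,
          shiftPt (fun i => if i < m then x i else 0) m (x m + k) = x + k • unitVec m := by
        intro k
        funext i
        rcases lt_trichotomy i m with hi | rfl | hi
        · simp [shiftPt, unitVec, hi, hi.ne]
        · simp [shiftPt, unitVec]
        · simp [shiftPt, unitVec, hi.ne', hx i hi, hi.not_gt]
      rw [hcorner m le_rfl]
      simpa [unitVec, seg_add_one A hA] using congrArg₂ (fun u v => A u v) (hshift 0) (hshift 1)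
    · simp [unitVec, hm.ne', hx m hm, seg_zero]
  simp only [tau0_eq_sum, hterm, sum_add_distrib, sum_ite_eq', mem_univ, if_true]

lemma bond_eq_zero_of_tau0_eq_zero {L : ℤ} {A : Pt → Pt → ℝ} (hA : ∀ x x', A x x' = - A x' x)
    (htau : ∀ x : Pt, inCube L x → tau0 A x = 0) {μ : Fin 3} {x : Pt}
    (hx : ∀ i, μ < i → x i = 0) (hxB : inCube L x) (hxB' : inCube L (x + unitVec μ)) :
    A x (x + unitVec μ) = 0 := by
  have h := tau0_add_unitVec A hA μ x hx
  rw [htau _ hxB, htau _ hxB'] at h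
  linarith

lemma inCube_add_unitVec_of_neg {L : ℤ} {x : Pt} {ν : Fin 3} (hx : inCube L x)
    (hneg : x ν < 0) : inCube L (x + unitVec ν) := by
  intro i
  by_cases hi : i = ν
  · subst hi
    have := abs_le.mp (hx i)
    simp only [Pi.add_apply, unitVec_apply_self]
    exact abs_le.mpr ⟨by omega, by omega⟩
  · simpa [unitVec_apply_of_ne hi] using hx i

lemma inCube_sub_unitVec_of_pos {L : ℤ} {x : Pt} {ν : Fin 3} (hx : inCube L x)
    (hpos : 0 < x ν) : inCube L (x - unitVec ν) := by
  intro i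
  by_cases hi : i = ν
  · subst hi
    have := abs_le.mp (hx i)
    simp only [Pi.sub_apply, unitVec_apply_self]
    exact abs_le.mpr ⟨by omega, by omega⟩
  · simpa [unitVec_apply_of_ne hi] using hx i

lemma bond_eq_bond_add_unitVec_of_flat {L : ℤ} {A : Pt → Pt → ℝ}
    (hA : ∀ x x', A x x' = - A x' x)
    (hdA : ∀ (x : Pt) (μ ν : Fin 3), μ ≠ ν →
      inCube L x → inCube L (x + unitVec μ) → inCube L (x + unitVec ν) →
      inCube L (x + unitVec μ + unitVec ν) → plaq A x μ ν = 0)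
    {μ ν : Fin 3} (hμν : μ ≠ ν)
    (hν : ∀ y, inCube L y → inCube L (y + unitVec ν) → A y (y + unitVec ν) = 0)
    {z : Pt} (hz : inCube L z) (hzμ : inCube L (z + unitVec μ)) (hzν : inCube L (z + unitVec ν))
    (hzνμ : inCube L (z + unitVec ν + unitVec μ)) :
    A z (z + unitVec μ) = A (z + unitVec ν) (z + unitVec ν + unitVec μ) := by
  rw [add_right_comm] at hzνμ ⊢
  have hp := hdA z μ ν hμν hz hzμ hzν hzνμ
  rw [plaq, hA (z + unitVec μ + unitVec ν), hA (z + unitVec ν) z, hν z hz hzν,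
    hν _ hzμ hzνμ] at hp
  linarith

lemma bond_eq_zero_of_hyperplane {L : ℤ} {A : Pt → Pt → ℝ} (hA : ∀ x x', A x x' = - A x' x)
    (hdA : ∀ (x : Pt) (μ ν : Fin 3), μ ≠ ν →
      inCube L x → inCube L (x + unitVec μ) → inCube L (x + unitVec ν) →
      inCube L (x + unitVec μ + unitVec ν) → plaq A x μ ν = 0)
    {μ ν : Fin 3} (hμν : μ ≠ ν) (Q : Pt → Prop) (hQ : ∀ y, Q (y + unitVec ν) ↔ Q y)
    (hν : ∀ y, inCube L y → inCube L (y + unitVec ν) → A y (y + unitVec ν) = 0)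
    (hbase : ∀ x, Q x → x ν = 0 → inCube L x → inCube L (x + unitVec μ) →
      A x (x + unitVec μ) = 0)
    (x : Pt) (hQx : Q x) (hxB : inCube L x) (hxB' : inCube L (x + unitVec μ)) :
    A x (x + unitVec μ) = 0 := by
  have htransport (z : Pt) := bond_eq_bond_add_unitVec_of_flat hA hdA hμν hν (z := z)
  obtain ⟨n, hn⟩ : ∃ n, (x ν).natAbs = n := ⟨_, rfl⟩
  induction n generalizing x with
  | zero => exact hbase x hQx (by omega) hxB hxB'
  | succ n ih =>
    rcases lt_or_gt_of_ne (show x ν ≠ 0 by omega) with hneg | hpos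
    · have hy : ((x + unitVec ν) ν).natAbs = n := by
        simp only [Pi.add_apply, unitVec_apply_self]
        omega
      have hμν' : (x + unitVec μ) ν < 0 := by simpa [unitVec_apply_of_ne hμν.symm] using hneg
      have hyB := inCube_add_unitVec_of_neg hxB hneg
      have hyB' := inCube_add_unitVec_of_neg hxB' hμν'
      rw [add_right_comm] at hyB'
      rw [htransport x hxB hxB' hyB hyB']
      exact ih _ ((hQ x).mpr hQx) hyB hyB' hy
    · set z := x - unitVec ν with hz
      have hzx : z + unitVec ν = x := sub_add_cancel x _
      have hzn : (z ν).natAbs = n := by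
        simp only [hz, Pi.sub_apply, unitVec_apply_self]
        omega
      have hμν' : 0 < (x + unitVec μ) ν := by simpa [unitVec_apply_of_ne hμν.symm] using hpos
      have hzB := inCube_sub_unitVec_of_pos hxB hpos
      have hzB' := inCube_sub_unitVec_of_pos hxB' hμν'
      rw [← sub_add_eq_add_sub] at hzB'
      rw [← hzx, ← htransport z hzB hzB' (hzx ▸ hxB) (hzx ▸ hxB')]
      exact ih z ((hQ z).mp (hzx ▸ hQx)) hzB hzB' hzn

theorem tree_axial_gauge_rigidity_general (L : ℤ)
    (A : Pt → Pt → ℝ) (hA : ∀ x x', A x x' = - A x' x)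
    (hdA : ∀ (x : Pt) (μ ν : Fin 3), μ ≠ ν →
      inCube L x → inCube L (x + unitVec μ) → inCube L (x + unitVec ν) →
      inCube L (x + unitVec μ + unitVec ν) → plaq A x μ ν = 0)
    (htau : ∀ x : Pt, inCube L x → tau0 A x = 0) :
    ∀ (x : Pt) (μ : Fin 3), inCube L x → inCube L (x + unitVec μ) →
      A x (x + unitVec μ) = 0 := by
  have h2 : ∀ x, inCube L x → inCube L (x + unitVec 2) → A x (x + unitVec 2) = 0 :=
    fun x => bond_eq_zero_of_tau0_eq_zero hA htau fun i hi => absurd hi (by omega)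
  have h1 : ∀ x, inCube L x → inCube L (x + unitVec 1) → A x (x + unitVec 1) = 0 :=
    fun x => bond_eq_zero_of_hyperplane hA hdA (by decide) (fun _ => True) (fun _ => Iff.rfl) h2
      (fun x _ hx2 => bond_eq_zero_of_tau0_eq_zero hA htau fun i hi => by
        fin_cases i <;> first | exact absurd hi (by decide) | exact hx2) x trivial
  have h0 : ∀ x, x 2 = 0 → inCube L x → inCube L (x + unitVec 0) → A x (x + unitVec 0) = 0 :=
    bond_eq_zero_of_hyperplane hA hdA (by decide) (fun x => x 2 = 0)
      (fun y => by simp [unitVec_apply_of_ne]) h1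
      (fun x hx2 hx1 => bond_eq_zero_of_tau0_eq_zero hA htau fun i hi => by
        fin_cases i <;> first | exact absurd hi (by decide) | exact hx1 | exact hx2)
  intro x μ
  fin_cases μ
  · exact bond_eq_zero_of_hyperplane hA hdA (by decide) (fun _ => True) (fun _ => Iff.rfl) h2
      (fun x _ hx2 => h0 x hx2) x trivial
  · exact h1 x
  · exact h2 x

/-- If a gauge field `A` on the cube `B` has vanishing field strength on
every plaquette contained in `B` and `(τ⁰A)(x) = 0` for every `x ∈ B`, then `A` vanishes
on every bond of `B`. -/
theorem tree_axial_gauge_rigidity (L : ℤ) (hL3 : 3 ≤ L) (hLodd : Odd L)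
    (A : Pt → Pt → ℝ) (hA : ∀ x x', A x x' = - A x' x)
    (hdA : ∀ (x : Pt) (μ ν : Fin 3), μ ≠ ν →
      inCube L x → inCube L (x + unitVec μ) → inCube L (x + unitVec ν) →
      inCube L (x + unitVec μ + unitVec ν) → plaq A x μ ν = 0)
    (htau : ∀ x : Pt, inCube L x → tau0 A x = 0) :
    ∀ (x : Pt) (μ : Fin 3), inCube L x → inCube L (x + unitVec μ) →
      A x (x + unitVec μ) = 0 :=
  tree_axial_gauge_rigidity_general L A hA hdA htau
end
end

section
/- Let A be a gauge field on the cube B such that dA(p) = 0 for every plaquette p contained in B. Then A(Γ^π_{0x}) = A(Γ_{0x}) for every permutation π of {1,2,3} and every x ∈ B; in particular (τA)(x) = (τ⁰A)(x) for all x ∈ B. -/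
open Finset

noncomputable section

/-! For antisymmetric `A`, `dA = 0` on a unit square says that the two two-step paths from one
corner to the opposite one have the same sum, and by antisymmetry this stays true when the square
is traversed with one or both directions reversed. Stacking unit squares row by row, the two
boundary paths of any lattice rectangle inside `B` have the same sum. Exchanging two consecutive
coordinate moves of `Γ^π_{0x}` changes the path only along such a rectangle, which lies in the box
spanned by `0` and `x`, hence in `B`. Adjacent transpositions generate the symmetric group, so
`A(Γ^π_{0x})` does not depend on `π`, and averaging gives `τA = τ⁰A`. -/

section FlatSquares

variable {V : Type*} [AddCommGroup V] (A : V → V → ℝ) {S : Set V} {d₁ d₂ : V}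

def IsFlatSquare (w d₁ d₂ : V) : Prop :=
  A w (w + d₁) + A (w + d₁) (w + d₁ + d₂) = A w (w + d₂) + A (w + d₂) (w + d₂ + d₁)

def IsFlatOn (S : Set V) (d₁ d₂ : V) : Prop :=
  ∀ w, w ∈ S → w + d₁ ∈ S → w + d₂ ∈ S → w + d₁ + d₂ ∈ S → IsFlatSquare A w d₁ d₂

variable {A}

theorem IsFlatOn.symm (h : IsFlatOn A S d₁ d₂) : IsFlatOn A S d₂ d₁ :=
  fun w h₀ h₂ h₁ h₂₁ => (h w h₀ h₁ h₂ (by rwa [add_right_comm])).symm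

theorem IsFlatOn.neg_left (hA : ∀ x y, A x y = -A y x) (h : IsFlatOn A S d₁ d₂) :
    IsFlatOn A S (-d₁) d₂ := by
  intro w h₀ h₁ h₂ h₁₂
  have hsq := h (w + -d₁) h₁ (by rwa [neg_add_cancel_right]) h₁₂
    (by rwa [neg_add_cancel_right])
  simp only [IsFlatSquare, neg_add_cancel_right, add_right_comm w (-d₁) d₂] at hsq ⊢
  linarith [hA w (w + -d₁), hA (w + d₂ + -d₁) (w + d₂)]

theorem IsFlatOn.zero_left (hA : ∀ x y, A x y = -A y x) : IsFlatOn A S 0 d₂ := by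
  intro w _ _ _ _
  simp only [IsFlatSquare, add_zero]
  linarith [hA w w, hA (w + d₂) (w + d₂)]

theorem IsFlatOn.sign_smul (hA : ∀ x y, A x y = -A y x) (h : IsFlatOn A S d₁ d₂) (s t : ℤ) :
    IsFlatOn A S (s.sign • d₁) (t.sign • d₂) := by
  have sign_left : ∀ (r : ℤ) {d d' : V}, IsFlatOn A S d d' → IsFlatOn A S (r.sign • d) d' := by
    intro r d d' h
    rcases Int.sign_trichotomy r with hr | hr | hr <;> rw [hr]
    · rwa [one_smul]
    · rw [zero_smul]; exact IsFlatOn.zero_left hA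
    · rw [neg_smul, one_smul]; exact h.neg_left hA
  exact (sign_left t (sign_left s h).symm).symm

end FlatSquares

section StepSum

variable {V : Type*} [AddCommMonoid V] (A : V → V → ℝ)

def stepSum (z d : V) (n : ℕ) : ℝ :=
  ∑ j ∈ range n, A (z + j • d) (z + (j + 1) • d)

theorem stepSum_zero (z d : V) : stepSum A z d 0 = 0 := rfl

theorem stepSum_succ (z d : V) (n : ℕ) :
    stepSum A z d (n + 1) = stepSum A z d n + A (z + n • d) (z + n • d + d) := by
  rw [stepSum, sum_range_succ, succ_nsmul, ← add_assoc]; rfl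

end StepSum

section Rectangle

variable {V : Type*} [AddCommGroup V] {A : V → V → ℝ} {S : Set V} {d₁ d₂ : V}

theorem IsFlatOn.stepSum_add_edge_comm (h : IsFlatOn A S d₁ d₂) {z : V} {m : ℕ}
    (hS : ∀ i ≤ m, z + i • d₁ ∈ S ∧ z + i • d₁ + d₂ ∈ S) :
    stepSum A z d₁ m + A (z + m • d₁) (z + m • d₁ + d₂)
      = A z (z + d₂) + stepSum A (z + d₂) d₁ m := by
  induction m with
  | zero => simp [stepSum_zero]
  | succ m ih =>
    have hsq : IsFlatSquare A (z + m • d₁) d₁ d₂ := by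
      have h₀ := hS m (by omega)
      have h₁ := hS (m + 1) le_rfl
      rw [succ_nsmul, ← add_assoc] at h₁
      exact h _ h₀.1 h₁.1 h₀.2 h₁.2
    have ih := ih fun i hi => hS i (by omega)
    rw [stepSum_succ, stepSum_succ, succ_nsmul, ← add_assoc, add_right_comm z d₂]
    unfold IsFlatSquare at hsq
    linarith

theorem IsFlatOn.stepSum_add_stepSum_comm (h : IsFlatOn A S d₁ d₂) {z : V} {m n : ℕ}
    (hS : ∀ i ≤ m, ∀ j ≤ n, z + i • d₁ + j • d₂ ∈ S) :
    stepSum A z d₁ m + stepSum A (z + m • d₁) d₂ n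
      = stepSum A z d₂ n + stepSum A (z + n • d₂) d₁ m := by
  induction n with
  | zero => simp [stepSum_zero]
  | succ n ih =>
    have hrow := h.stepSum_add_edge_comm (z := z + n • d₂) (m := m) fun i hi => by
      refine ⟨?_, ?_⟩
      · rw [add_right_comm]; exact hS i hi n (by omega)
      · have := hS i hi (n + 1) le_rfl
        rwa [succ_nsmul, ← add_assoc, add_right_comm z] at this
    have ih := ih fun i hi j hj => hS i hi j (by omega)
    simp only [stepSum_succ, succ_nsmul, ← add_assoc] at hrow ⊢
    rw [add_right_comm z (m • d₁)]
    linarith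

end Rectangle

theorem eq_one_of_forall_mul_swap_castSucc_succ {β : Type*} {n : ℕ}
    {f : Equiv.Perm (Fin (n + 1)) → β}
    (hf : ∀ π (k : Fin n), f (π * Equiv.swap k.castSucc k.succ) = f π)
    (π : Equiv.Perm (Fin (n + 1))) : f π = f 1 := by
  have key : ∀ σ ∈ Submonoid.closure (Set.range fun k : Fin n => Equiv.swap k.castSucc k.succ),
      ∀ π, f (π * σ) = f π := by
    intro σ hσ
    induction hσ using Submonoid.closure_induction with
    | mem σ hσ => obtain ⟨k, rfl⟩ := hσ; exact fun π => hf π k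
    | one => simp
    | mul σ τ _ _ hσ hτ => intro π; rw [← mul_assoc, hτ, hσ]
  simpa using key π (by rw [Equiv.Perm.mclosure_swap_castSucc_succ]; trivial) 1

theorem isFlatSquare_of_plaq_eq_zero {A : Pt → Pt → ℝ} (hA : ∀ x y, A x y = -A y x) {x : Pt}
    {μ ν : Fin 3} (h : plaq A x μ ν = 0) : IsFlatSquare A x (unitVec μ) (unitVec ν) := by
  unfold plaq at h
  unfold IsFlatSquare
  rw [add_right_comm x (unitVec ν)]
  linarith [hA (x + unitVec μ + unitVec ν) (x + unitVec ν), hA (x + unitVec ν) x]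

theorem shiftPt_eq_add_zsmul (z : Pt) (μ : Fin 3) (k : ℤ) :
    shiftPt z μ k = z + k • unitVec μ := by
  funext i
  by_cases h : i = μ <;> simp [shiftPt, unitVec, h]

theorem natAbs_smul_sign_smul {G : Type*} [AddCommGroup G] (t : ℤ) (v : G) :
    t.natAbs • t.sign • v = t • v := by
  rw [← natCast_zsmul, smul_smul, mul_comm, Int.sign_mul_natAbs]

theorem natCast_mul_sign_mem_uIcc {s : ℤ} {i : ℕ} (hi : i ≤ s.natAbs) :
    (i : ℤ) * s.sign ∈ Set.uIcc 0 s := by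
  rcases lt_trichotomy s 0 with hs | rfl | hs
  · rw [Int.sign_eq_neg_one_of_neg hs, Set.mem_uIcc]; omega
  · simp_all
  · rw [Int.sign_eq_one_of_pos hs, Set.mem_uIcc]; omega

theorem seg_eq_stepSum (A : Pt → Pt → ℝ) (z : Pt) (μ : Fin 3) (t : ℤ) :
    seg A z μ t = stepSum A z (t.sign • unitVec μ) t.natAbs := by
  rcases lt_trichotomy t 0 with ht | rfl | ht
  · rw [seg, if_neg ht.not_ge, Int.sign_eq_neg_one_of_neg ht, stepSum,
      show (-t).toNat = t.natAbs by omega]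
    refine sum_congr rfl fun j _ => ?_
    simp only [shiftPt_eq_add_zsmul, smul_neg, neg_smul, one_smul, add_smul,
      natCast_zsmul, sub_eq_add_neg, neg_add, add_comm]
  · simp [seg, stepSum]
  · rw [seg, if_pos ht.le, Int.sign_eq_one_of_pos ht, one_smul, stepSum,
      show t.toNat = t.natAbs by omega]
    simp [shiftPt_eq_add_zsmul]

theorem IsFlatOn.seg_add_seg_comm {A : Pt → Pt → ℝ} (hA : ∀ x y, A x y = -A y x)
    {S : Set Pt} {μ ν : Fin 3} (h : IsFlatOn A S (unitVec μ) (unitVec ν)) {z : Pt} {s t : ℤ}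
    (hS : ∀ a ∈ Set.uIcc 0 s, ∀ b ∈ Set.uIcc 0 t, z + a • unitVec μ + b • unitVec ν ∈ S) :
    seg A z μ s + seg A (shiftPt z μ s) ν t = seg A z ν t + seg A (shiftPt z ν t) μ s := by
  rw [seg_eq_stepSum, seg_eq_stepSum, seg_eq_stepSum, seg_eq_stepSum, shiftPt_eq_add_zsmul,
    shiftPt_eq_add_zsmul, ← natAbs_smul_sign_smul s, ← natAbs_smul_sign_smul t]
  refine (h.sign_smul hA s t).stepSum_add_stepSum_comm fun i hi j hj => ?_
  rw [← natCast_zsmul, ← natCast_zsmul, smul_smul, smul_smul]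
  exact hS _ (natCast_mul_sign_mem_uIcc hi) _ (natCast_mul_sign_mem_uIcc hj)

theorem IsFlatOn.seg_add_seg_comm_of_box {A : Pt → Pt → ℝ} (hA : ∀ x y, A x y = -A y x)
    {S : Set Pt} {y x : Pt} (hbox : ∀ p : Pt, (∀ i, p i ∈ Set.uIcc (y i) (x i)) → p ∈ S)
    {μ ν : Fin 3} (hμν : μ ≠ ν) (h : IsFlatOn A S (unitVec μ) (unitVec ν)) {z : Pt}
    (hz : ∀ i, z i ∈ Set.uIcc (y i) (x i)) (hzμ : z μ = y μ) (hzν : z ν = y ν) :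
    seg A z μ (x μ - y μ) + seg A (shiftPt z μ (x μ - y μ)) ν (x ν - y ν)
      = seg A z ν (x ν - y ν) + seg A (shiftPt z ν (x ν - y ν)) μ (x μ - y μ) := by
  refine h.seg_add_seg_comm hA fun a ha b hb => hbox _ fun i => ?_
  have hzi := hz i
  simp only [Set.mem_uIcc] at ha hb hzi ⊢
  by_cases hiμ : i = μ
  · subst hiμ
    simp only [Pi.add_apply, zsmul_eq_mul, Pi.mul_apply, Pi.intCast_apply, Int.cast_eq, unitVec,
      if_pos, if_neg hμν, mul_one, mul_zero, add_zero]
    omega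
  · by_cases hiν : i = ν
    · subst hiν
      simp only [Pi.add_apply, zsmul_eq_mul, Pi.mul_apply, Pi.intCast_apply, Int.cast_eq, unitVec,
        if_pos, if_neg hiμ, mul_one, mul_zero]
      omega
    · simp only [Pi.add_apply, zsmul_eq_mul, Pi.mul_apply, Pi.intCast_apply, Int.cast_eq, unitVec,
        if_neg hiμ, if_neg hiν, mul_zero, add_zero]
      exact hzi

theorem interPt_zero (y x : Pt) (π : Equiv.Perm (Fin 3)) : interPt y x π 0 = y := by
  funext i; simp [interPt]

theorem interPt_succ (y x : Pt) (π : Equiv.Perm (Fin 3)) (m : Fin 3) :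
    interPt y x π (m + 1) = shiftPt (interPt y x π m) (π m) (x (π m) - y (π m)) := by
  funext i
  by_cases h : i = π m
  · subst h; simp [interPt, shiftPt]
  · have hm : (π.symm i : ℕ) ≠ m := fun he => h (by rw [← Fin.ext he, Equiv.apply_symm_apply])
    simp only [interPt, shiftPt, if_neg h]
    split_ifs <;> omega

theorem interPt_apply_mem_uIcc (y x : Pt) (π : Equiv.Perm (Fin 3)) (m : ℕ) (i : Fin 3) :
    interPt y x π m i ∈ Set.uIcc (y i) (x i) := by
  unfold interPt; split_ifs
  exacts [Set.right_mem_uIcc, Set.left_mem_uIcc]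

theorem interPt_apply_of_le (y x : Pt) (π : Equiv.Perm (Fin 3)) {m : ℕ} {j : Fin 3}
    (h : m ≤ j) : interPt y x π m (π j) = y (π j) := by
  simp only [interPt, Equiv.symm_apply_apply, ite_eq_right_iff]
  omega

theorem interPt_mul_swap (y x : Pt) (π : Equiv.Perm (Fin 3)) {a b : Fin 3} {m : ℕ}
    (hab : (a : ℕ) < m ↔ (b : ℕ) < m) : interPt y x (π * Equiv.swap a b) m = interPt y x π m := by
  funext i
  have key : (((π * Equiv.swap a b).symm i : Fin 3) : ℕ) < m ↔ ((π.symm i : Fin 3) : ℕ) < m := by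
    rw [Equiv.Perm.mul_def, Equiv.symm_trans_apply, Equiv.symm_swap, Equiv.swap_apply_def]
    split_ifs with h₁ h₂
    · rw [h₁, hab]
    · rw [h₂, hab]
    · rfl
  simp only [interPt, key]

theorem gammaSum_mul_swap {A : Pt → Pt → ℝ} (hA : ∀ x y, A x y = -A y x) {S : Set Pt}
    (hflat : ∀ μ ν, μ ≠ ν → IsFlatOn A S (unitVec μ) (unitVec ν)) {y x : Pt}
    (hbox : ∀ p : Pt, (∀ i, p i ∈ Set.uIcc (y i) (x i)) → p ∈ S)
    (π : Equiv.Perm (Fin 3)) (k : Fin 2) :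
    gammaSum A (π * Equiv.swap k.castSucc k.succ) y x = gammaSum A π y x := by
  have hne : π k.castSucc ≠ π k.succ := π.injective.ne Fin.castSucc_lt_succ.ne
  have hrect := (hflat _ _ hne).seg_add_seg_comm_of_box hA hbox hne
    (interPt_apply_mem_uIcc y x π k) (interPt_apply_of_le y x π (by simp))
    (interPt_apply_of_le y x π (by simp))
  fin_cases k
  · have h₁ := interPt_succ y x π 0
    have h₁' := interPt_succ y x (π * Equiv.swap 0 1) 0
    have h₂ := interPt_mul_swap y x π (a := 0) (b := 1) (m := 2) (by decide)
    have hσ : Equiv.swap (0 : Fin 3) 1 2 = 2 := by decide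
    simp only [Fin.isValue, Fin.coe_ofNat_eq_mod, Nat.zero_mod, zero_add, interPt_zero,
      Equiv.Perm.coe_mul, Function.comp_apply, Equiv.swap_apply_left, Fin.zero_eta,
      Fin.castSucc_zero, Fin.succ_zero_eq_one] at h₁ h₁' hrect
    simp only [gammaSum, Fin.sum_univ_three, Fin.isValue, Fin.zero_eta, Fin.castSucc_zero,
      Fin.succ_zero_eq_one, Fin.coe_ofNat_eq_mod, Nat.zero_mod, Nat.one_mod, Nat.mod_succ,
      Equiv.Perm.coe_mul, Function.comp_apply, Equiv.swap_apply_left, Equiv.swap_apply_right,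
      interPt_zero, h₁, h₁', h₂, hσ]
    linarith
  · have h₀ := interPt_mul_swap y x π (a := 1) (b := 2) (m := 1) (by decide)
    have h₂ := interPt_succ y x π 1
    have h₂' := interPt_succ y x (π * Equiv.swap 1 2) 1
    have hσ : Equiv.swap (1 : Fin 3) 2 0 = 0 := by decide
    simp only [Fin.isValue, Fin.coe_ofNat_eq_mod, Nat.one_mod, Nat.reduceAdd, h₀,
      Equiv.Perm.coe_mul, Function.comp_apply, Equiv.swap_apply_left, Fin.mk_one,
      Fin.castSucc_one, Fin.succ_one_eq_two] at h₂ h₂' hrect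
    simp only [gammaSum, Fin.sum_univ_three, Fin.isValue, Fin.mk_one, Fin.castSucc_one,
      Fin.succ_one_eq_two, Fin.coe_ofNat_eq_mod, Nat.zero_mod, Nat.one_mod, Nat.mod_succ,
      Equiv.Perm.coe_mul, Function.comp_apply, Equiv.swap_apply_left, Equiv.swap_apply_right,
      interPt_zero, h₀, h₂, h₂', hσ]
    linarith

theorem inCube_of_mem_uIcc {L : ℤ} {x : Pt} (hx : inCube L x) (p : Pt)
    (hp : ∀ i, p i ∈ Set.uIcc ((0 : Pt) i) (x i)) : inCube L p := by
  intro i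
  have hxi := hx i
  have hpi := hp i
  rw [Pi.zero_apply, Set.mem_uIcc] at hpi
  rw [abs_le] at hxi ⊢
  omega

theorem path_sum_independent_of_ordering_general (L : ℤ)
    (A : Pt → Pt → ℝ) (hA : ∀ x x', A x x' = - A x' x)
    (hdA : ∀ (x : Pt) (μ ν : Fin 3), μ ≠ ν →
      inCube L x → inCube L (x + unitVec μ) → inCube L (x + unitVec ν) →
      inCube L (x + unitVec μ + unitVec ν) → plaq A x μ ν = 0) :
    (∀ (π : Equiv.Perm (Fin 3)) (x : Pt), inCube L x →
        gammaSum A π 0 x = gammaSum A 1 0 x) ∧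
    (∀ x : Pt, inCube L x → tau A x = tau0 A x) := by
  have hflat : ∀ μ ν, μ ≠ ν → IsFlatOn A {p | inCube L p} (unitVec μ) (unitVec ν) :=
    fun μ ν hμν w h₀ h₁ h₂ h₃ => isFlatSquare_of_plaq_eq_zero hA (hdA w μ ν hμν h₀ h₁ h₂ h₃)
  have hpath : ∀ π x, inCube L x → gammaSum A π 0 x = gammaSum A 1 0 x := fun π x hx =>
    eq_one_of_forall_mul_swap_castSucc_succ (f := fun σ => gammaSum A σ 0 x)
      (gammaSum_mul_swap hA hflat (inCube_of_mem_uIcc hx)) π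
  refine ⟨hpath, fun x hx => ?_⟩
  simp only [tau, tau0, hpath _ x hx, sum_const, card_univ, Fintype.card_perm, Fintype.card_fin]
  ring

/-- If a gauge field `A` on the cube `B` has vanishing field strength on
every plaquette contained in `B`, then `A(Γ^π_{0x}) = A(Γ_{0x})` for every permutation `π`
and every `x ∈ B`; in particular `(τA)(x) = (τ⁰A)(x)` for all `x ∈ B`. -/
theorem path_sum_independent_of_ordering (L : ℤ) (hL3 : 3 ≤ L) (hLodd : Odd L)
    (A : Pt → Pt → ℝ) (hA : ∀ x x', A x x' = - A x' x)
    (hdA : ∀ (x : Pt) (μ ν : Fin 3), μ ≠ ν →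
      inCube L x → inCube L (x + unitVec μ) → inCube L (x + unitVec ν) →
      inCube L (x + unitVec μ + unitVec ν) → plaq A x μ ν = 0) :
    (∀ (π : Equiv.Perm (Fin 3)) (x : Pt), inCube L x →
        gammaSum A π 0 x = gammaSum A 1 0 x) ∧
    (∀ x : Pt, inCube L x → tau A x = tau0 A x) :=
  path_sum_independent_of_ordering_general L A hA hdA
end
end

section
/- Let r be a linear isometry of ℤ³ fixing 0 and mapping B onto itself (a signed permutation of the coordinates), and for a gauge field A on B define the gauge field A_r by A_r(x,x') := A(r⁻¹x, r⁻¹x'). Then (τ(A_r))(x) = (τA)(r⁻¹x) for every x ∈ B. -/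
open Finset

noncomputable section

/-- The signed permutation `r` of `ℤ³` determined by a permutation `σ` of the coordinates
and signs `ε`: `(r x) i = ε i · x (σ i)`. -/
def rmap (σ : Equiv.Perm (Fin 3)) (ε : Fin 3 → ℤ) (x : Pt) : Pt := fun i => ε i * x (σ i)

/-- The inverse of the signed permutation `rmap σ ε` (when `ε i = ±1`). -/
def rinv (σ : Equiv.Perm (Fin 3)) (ε : Fin 3 → ℤ) : Pt → Pt :=
  rmap σ.symm fun i => ε (σ.symm i)

lemma rinv_shift (σ : Equiv.Perm (Fin 3)) (ε : Fin 3 → ℤ) (z : Pt) (μ : Fin 3) (k : ℤ) :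
    rinv σ ε (shiftPt z μ k) = shiftPt (rinv σ ε z) (σ μ) (ε μ * k) := by
  funext i
  simp only [rinv, rmap, shiftPt]
  by_cases h : i = σ μ
  · subst h
    simp [Equiv.symm_apply_apply, mul_add]
  · have h2 : ¬ σ.symm i = μ := by
      intro hc; exact h (by rw [← hc, Equiv.apply_symm_apply])
    simp [h, h2]

lemma seg_rinv (σ : Equiv.Perm (Fin 3)) (ε : Fin 3 → ℤ) (hε : ∀ i, ε i = 1 ∨ ε i = -1)
    (A : Pt → Pt → ℝ) (z : Pt) (μ : Fin 3) (t : ℤ) :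
    seg (fun u v => A (rinv σ ε u) (rinv σ ε v)) z μ t
      = seg A (rinv σ ε z) (σ μ) (ε μ * t) := by
  rcases hε μ with h | h
  · simp only [seg, rinv_shift, h, one_mul]
  · simp only [seg, rinv_shift, h, neg_one_mul]
    by_cases ht : 0 ≤ t
    · by_cases ht0 : t = 0
      · subst ht0; simp
      · have h1 : ¬ (0 : ℤ) ≤ -t := by omega
        rw [if_pos ht, if_neg h1]
        have h2 : (-(-t)).toNat = t.toNat := by omega
        rw [h2]
        refine Finset.sum_congr rfl fun j _ => ?_
        have e1 : -((j : ℤ) + 1) = -(j : ℤ) - 1 := by ring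
        rw [e1]
    · have h1 : (0 : ℤ) ≤ -t := by omega
      rw [if_neg ht, if_pos h1]
      refine Finset.sum_congr rfl fun j _ => ?_
      have e1 : -(-(j : ℤ)) = (j : ℤ) := by ring
      have e2 : -(-(j : ℤ) - 1) = (j : ℤ) + 1 := by ring
      rw [e1, e2]

lemma rinv_interPt (σ : Equiv.Perm (Fin 3)) (ε : Fin 3 → ℤ) (x : Pt)
    (π : Equiv.Perm (Fin 3)) (m : ℕ) :
    rinv σ ε (interPt 0 x π m) = interPt 0 (rinv σ ε x) (σ * π) m := by
  funext i
  have hsymm : (σ * π).symm i = π.symm (σ.symm i) := rfl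
  simp only [rinv, rmap, interPt, hsymm, Pi.zero_apply]
  split_ifs <;> simp

lemma gammaSum_rinv (σ : Equiv.Perm (Fin 3)) (ε : Fin 3 → ℤ) (hε : ∀ i, ε i = 1 ∨ ε i = -1)
    (A : Pt → Pt → ℝ) (π : Equiv.Perm (Fin 3)) (x : Pt) :
    gammaSum (fun u v => A (rinv σ ε u) (rinv σ ε v)) π 0 x
      = gammaSum A (σ * π) 0 (rinv σ ε x) := by
  unfold gammaSum
  refine Finset.sum_congr rfl fun m _ => ?_
  rw [seg_rinv σ ε hε, rinv_interPt]
  have h1 : (σ * π) m = σ (π m) := rfl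
  have h2 : rinv σ ε x (σ (π m)) = ε (π m) * x (π m) := by
    simp [rinv, rmap, Equiv.symm_apply_apply]
  rw [h1, h2]
  congr 1
  simp [Pi.zero_apply, mul_sub]

/-- Covariance of `τ`: for a lattice symmetry `r` (a signed permutation of
the coordinates, fixing `0` and mapping `B` onto itself), with `A_r(x,x') := A(r⁻¹x, r⁻¹x')`,
one has `(τ(A_r))(x) = (τA)(r⁻¹x)` for every `x ∈ B`. -/
theorem tau_covariant (L : ℤ) (hL3 : 3 ≤ L) (hLodd : Odd L)
    (σ : Equiv.Perm (Fin 3)) (ε : Fin 3 → ℤ) (hε : ∀ i, ε i = 1 ∨ ε i = -1)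
    (A : Pt → Pt → ℝ) (hA : ∀ x x', A x x' = - A x' x) :
    ∀ x : Pt, inCube L x →
      tau (fun u v => A (rinv σ ε u) (rinv σ ε v)) x = tau A (rinv σ ε x) := by
  intro x _
  unfold tau
  congr 1
  exact Fintype.sum_equiv (Equiv.mulLeft σ) _ _
    (fun π => gammaSum_rinv σ ε hε A π x)
end
end

section
/- For every J ∈ V, the vector G̃J lies in ker Q, and A = G̃J is the unique minimizer of the function A ↦ (1/2)⟨A, G^{-1}A⟩ − ⟨A, J⟩ over the subspace {A ∈ V : QA = 0}, where G̃ := G − G Qᵀ (Q G Qᵀ)^{-1} Q G. -/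
/-!
On `ker Q` the objective `f A = ½⟪A, G⁻¹A⟫ - ⟪A, J⟫` is a strictly convex quadratic, so a
point `A₀ ∈ ker Q` is its unique minimizer as soon as the gradient `G⁻¹A₀ - J` is orthogonal
to `ker Q`. For `A₀ = G̃J` that gradient is `-Qᵀ(B Q G J)`, which lies in
`range Qᵀ = (ker Q)ᗮ`, and `Q G̃ J = QGJ - (QGQᵀ) B (QGJ) = 0`.
-/

open scoped RealInnerProductSpace

section QuadraticMinimization

variable {V : Type*} [NormedAddCommGroup V] [InnerProductSpace ℝ V]

lemma LinearMap.IsSymmetric.of_comp_eq_id {G Ginv : V →ₗ[ℝ] V} (hG : G.IsSymmetric)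
    (h : G ∘ₗ Ginv = LinearMap.id) : Ginv.IsSymmetric := by
  have hG' (x : V) : G (Ginv x) = x := LinearMap.congr_fun h x
  intro x y
  calc ⟪Ginv x, y⟫ = ⟪Ginv x, G (Ginv y)⟫ := by rw [hG']
    _ = ⟪G (Ginv x), Ginv y⟫ := (hG _ _).symm
    _ = ⟪x, Ginv y⟫ := by rw [hG']

lemma inner_map_pos_of_comp_eq_id {G Ginv : V →ₗ[ℝ] V}
    (hGpos : ∀ v : V, v ≠ 0 → 0 < ⟪G v, v⟫) (h : G ∘ₗ Ginv = LinearMap.id) {x : V}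
    (hx : x ≠ 0) : 0 < ⟪x, Ginv x⟫ := by
  have hG' : G (Ginv x) = x := LinearMap.congr_fun h x
  have hne : Ginv x ≠ 0 := fun h0 => hx (by rw [← hG', h0, map_zero])
  simpa only [hG'] using hGpos (Ginv x) hne

lemma quadratic_add_eq {T : V →ₗ[ℝ] V} (hT : T.IsSymmetric) (A₀ D J : V) :
    (1 / 2) * ⟪A₀ + D, T (A₀ + D)⟫ - ⟪A₀ + D, J⟫ =
      ((1 / 2) * ⟪A₀, T A₀⟫ - ⟪A₀, J⟫) + (1 / 2) * ⟪D, T D⟫ + ⟪D, T A₀ - J⟫ := by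
  have hsymm : ⟪A₀, T D⟫ = ⟪D, T A₀⟫ := by rw [← hT, real_inner_comm]
  simp only [map_add, inner_add_left, inner_add_right, inner_sub_right, hsymm]
  ring

lemma quadratic_lt_of_inner_sub_eq_zero {T : V →ₗ[ℝ] V} (hT : T.IsSymmetric)
    (hpos : ∀ x : V, x ≠ 0 → 0 < ⟪x, T x⟫) {A₀ A J : V} (hne : A ≠ A₀)
    (horth : ⟪A - A₀, T A₀ - J⟫ = 0) :
    (1 / 2) * ⟪A₀, T A₀⟫ - ⟪A₀, J⟫ < (1 / 2) * ⟪A, T A⟫ - ⟪A, J⟫ := by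
  have hD := hpos (A - A₀) (sub_ne_zero.mpr hne)
  have hexp := quadratic_add_eq hT A₀ (A - A₀) J
  rw [add_sub_cancel, horth] at hexp
  linarith

end QuadraticMinimization

section Constrained

variable {V W : Type*} [NormedAddCommGroup V] [InnerProductSpace ℝ V] [FiniteDimensional ℝ V]
  [NormedAddCommGroup W] [InnerProductSpace ℝ W] [FiniteDimensional ℝ W]
  (G : V →ₗ[ℝ] V) (Q : V →ₗ[ℝ] W) (B : W →ₗ[ℝ] W)

/-- The paper's `G̃`, with `B` standing for `(Q G Qᵀ)⁻¹`. -/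
noncomputable def constrainedOperator : V →ₗ[ℝ] V :=
  G - G ∘ₗ LinearMap.adjoint Q ∘ₗ B ∘ₗ Q ∘ₗ G

variable {G Q B}

lemma map_constrainedOperator_apply
    (hB : (Q ∘ₗ G ∘ₗ LinearMap.adjoint Q) ∘ₗ B = LinearMap.id) (J : V) :
    Q (constrainedOperator G Q B J) = 0 := by
  have hQB : Q (G (LinearMap.adjoint Q (B (Q (G J))))) = Q (G J) :=
    LinearMap.congr_fun hB (Q (G J))
  simp only [constrainedOperator, LinearMap.sub_apply, LinearMap.comp_apply, map_sub, hQB,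
    sub_self]

lemma inv_constrainedOperator_apply {Ginv : V →ₗ[ℝ] V} (hGinv : Ginv ∘ₗ G = LinearMap.id)
    (J : V) : Ginv (constrainedOperator G Q B J) = J - LinearMap.adjoint Q (B (Q (G J))) := by
  have hGinv' (x : V) : Ginv (G x) = x := LinearMap.congr_fun hGinv x
  simp only [constrainedOperator, LinearMap.sub_apply, LinearMap.comp_apply, map_sub, hGinv']

lemma inner_sub_adjoint_eq_zero {A A₀ : V} (hA : Q A = 0) (hA₀ : Q A₀ = 0) (w : W) :
    ⟪A - A₀, -LinearMap.adjoint Q w⟫ = 0 := by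
  rw [inner_neg_right, LinearMap.adjoint_inner_right, map_sub, hA, hA₀, sub_zero,
    inner_zero_left, neg_zero]

end Constrained

theorem constrained_minimizer_general {V W : Type*}
    [NormedAddCommGroup V] [InnerProductSpace ℝ V] [FiniteDimensional ℝ V]
    [NormedAddCommGroup W] [InnerProductSpace ℝ W] [FiniteDimensional ℝ W]
    (G : V →ₗ[ℝ] V) (hGsym : LinearMap.IsSymmetric G)
    (hGpos : ∀ v : V, v ≠ 0 → 0 < ⟪G v, v⟫)
    (Q : V →ₗ[ℝ] W)
    (B : W →ₗ[ℝ] W)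
    (hB₁ : (Q ∘ₗ G ∘ₗ LinearMap.adjoint Q) ∘ₗ B = LinearMap.id)
    (Ginv : V →ₗ[ℝ] V)
    (hGinv₁ : Ginv ∘ₗ G = LinearMap.id) (hGinv₂ : G ∘ₗ Ginv = LinearMap.id)
    (J : V) :
    Q ((G - G ∘ₗ LinearMap.adjoint Q ∘ₗ B ∘ₗ Q ∘ₗ G) J) = 0 ∧
    ∀ A : V, Q A = 0 → A ≠ (G - G ∘ₗ LinearMap.adjoint Q ∘ₗ B ∘ₗ Q ∘ₗ G) J →
      (1 / 2) * ⟪(G - G ∘ₗ LinearMap.adjoint Q ∘ₗ B ∘ₗ Q ∘ₗ G) J,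
          Ginv ((G - G ∘ₗ LinearMap.adjoint Q ∘ₗ B ∘ₗ Q ∘ₗ G) J)⟫
        - ⟪(G - G ∘ₗ LinearMap.adjoint Q ∘ₗ B ∘ₗ Q ∘ₗ G) J, J⟫
      < (1 / 2) * ⟪A, Ginv A⟫ - ⟪A, J⟫ := by
  have hQA₀ := map_constrainedOperator_apply hB₁ J
  refine ⟨hQA₀, fun A hQA hne => ?_⟩
  have horth :
      ⟪A - constrainedOperator G Q B J, Ginv (constrainedOperator G Q B J) - J⟫ = 0 := by
    rw [inv_constrainedOperator_apply hGinv₁, sub_sub_cancel_left]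
    exact inner_sub_adjoint_eq_zero hQA hQA₀ _
  exact quadratic_lt_of_inner_sub_eq_zero (hGsym.of_comp_eq_id hGinv₂)
    (fun _ hx => inner_map_pos_of_comp_eq_id hGpos hGinv₂ hx) hne horth

/-- With `G : V → V` self-adjoint positive definite, `Q : V → W`
surjective, `B` a two-sided inverse of `QGQᵀ` and `Ginv` a two-sided inverse of `G`:
for every `J ∈ V`, the vector `G̃J` (with `G̃ = G − GQᵀ B QG`) lies in `ker Q`, and
`A = G̃J` is the unique minimizer of `A ↦ (1/2)⟨A, G⁻¹A⟩ − ⟨A, J⟩` on `{A : QA = 0}`. -/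
theorem constrained_minimizer {V W : Type*}
    [NormedAddCommGroup V] [InnerProductSpace ℝ V] [FiniteDimensional ℝ V]
    [NormedAddCommGroup W] [InnerProductSpace ℝ W] [FiniteDimensional ℝ W]
    (G : V →ₗ[ℝ] V) (hGsym : LinearMap.IsSymmetric G)
    (hGpos : ∀ v : V, v ≠ 0 → 0 < ⟪G v, v⟫)
    (Q : V →ₗ[ℝ] W) (hQ : Function.Surjective Q)
    (B : W →ₗ[ℝ] W)
    (hB₁ : (Q ∘ₗ G ∘ₗ LinearMap.adjoint Q) ∘ₗ B = LinearMap.id)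
    (hB₂ : B ∘ₗ (Q ∘ₗ G ∘ₗ LinearMap.adjoint Q) = LinearMap.id)
    (Ginv : V →ₗ[ℝ] V)
    (hGinv₁ : Ginv ∘ₗ G = LinearMap.id) (hGinv₂ : G ∘ₗ Ginv = LinearMap.id)
    (J : V) :
    Q ((G - G ∘ₗ LinearMap.adjoint Q ∘ₗ B ∘ₗ Q ∘ₗ G) J) = 0 ∧
    ∀ A : V, Q A = 0 → A ≠ (G - G ∘ₗ LinearMap.adjoint Q ∘ₗ B ∘ₗ Q ∘ₗ G) J →
      (1 / 2) * ⟪(G - G ∘ₗ LinearMap.adjoint Q ∘ₗ B ∘ₗ Q ∘ₗ G) J,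
          Ginv ((G - G ∘ₗ LinearMap.adjoint Q ∘ₗ B ∘ₗ Q ∘ₗ G) J)⟫
        - ⟪(G - G ∘ₗ LinearMap.adjoint Q ∘ₗ B ∘ₗ Q ∘ₗ G) J, J⟫
      < (1 / 2) * ⟪A, Ginv A⟫ - ⟪A, J⟫ :=
  constrained_minimizer_general G hGsym hGpos Q B hB₁ Ginv hGinv₁ hGinv₂ J
end

section
/- Let M be an n×n real symmetric positive definite matrix. Then the matrix-valued function x ↦ x^{-1/2}(M + x·I)^{-1} is integrable on (0,∞), and the matrix T := (1/π) ∫₀^∞ x^{-1/2}(M + x·I)^{-1} dx is symmetric positive definite and satisfies T·M·T = I; that is, T is the inverse of the positive square root of M. -/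
/-!
Diagonalising `M`, every matrix in sight is a function of `M` in the continuous functional
calculus: `(M + x • 1)⁻¹ = cfc (· + x)⁻¹ M`. The entries of `cfc g M` are fixed linear
combinations of the values of `g` at the eigenvalues, so the entrywise integral commutes with
`cfc`, and `T = cfc (fun t => π⁻¹ ∫₀^∞ x^{-1/2} (t + x)⁻¹ dx) M = cfc (fun t => (√t)⁻¹) M`; the
scalar integral is `∫₀^∞ 2 (t + s²)⁻¹ ds = π / √t` after substituting `x = s²`.
-/

open MeasureTheory

noncomputable section

/-- The matrix `T = (1/π) ∫₀^∞ x^{-1/2} (M + x·I)⁻¹ dx` (entrywise integral). -/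
def sqrtInvIntegral (n : ℕ) (M : Matrix (Fin n) (Fin n) ℝ) : Matrix (Fin n) (Fin n) ℝ :=
  Matrix.of fun i j =>
    (1 / Real.pi) * ∫ x in Set.Ioi (0 : ℝ), x ^ (-(1 : ℝ) / 2) * ((M + x • 1)⁻¹ i j)

open Real Set
open scoped MatrixOrder

section Scalar

variable {a : ℝ}

lemma inv_add_sq_eq_inv_mul_inv_one_add_sq (ha : 0 < a) (t : ℝ) :
    (a + t ^ 2)⁻¹ = a⁻¹ * (1 + ((√a)⁻¹ * t) ^ 2)⁻¹ := by
  have hs : (√a) ^ 2 = a := sq_sqrt ha.le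
  have : 0 < √a := sqrt_pos.2 ha
  field_simp
  rw [hs, mul_comm]

lemma integrableOn_Ioi_inv_add_sq (ha : 0 < a) :
    IntegrableOn (fun t : ℝ => (a + t ^ 2)⁻¹) (Ioi 0) := by
  simp_rw [inv_add_sq_eq_inv_mul_inv_one_add_sq ha]
  refine Integrable.const_mul ?_ _
  have := (integrableOn_Ioi_comp_mul_left_iff (fun s : ℝ => (1 + s ^ 2)⁻¹) 0
    (inv_pos.2 (sqrt_pos.2 ha))).2
  rw [mul_zero] at this
  exact this integrable_inv_one_add_sq.integrableOn

lemma integral_Ioi_inv_add_sq (ha : 0 < a) :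
    ∫ t in Ioi (0 : ℝ), (a + t ^ 2)⁻¹ = π / (2 * √a) := by
  simp_rw [inv_add_sq_eq_inv_mul_inv_one_add_sq ha]
  rw [integral_const_mul, integral_comp_mul_left_Ioi (fun s : ℝ => (1 + s ^ 2)⁻¹) 0
    (inv_pos.2 (sqrt_pos.2 ha)), mul_zero, integral_Ioi_inv_one_add_sq, arctan_zero, sub_zero,
    inv_inv, smul_eq_mul]
  have hs : (√a) ^ 2 = a := sq_sqrt ha.le
  have : 0 < √a := sqrt_pos.2 ha
  field_simp
  rw [hs]

lemma rpow_neg_half_mul_inv_add_comp_sq {t : ℝ} (ht : 0 < t) :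
    t ^ ((2 : ℝ) - 1) • ((t ^ (2 : ℝ)) ^ (-(1 : ℝ) / 2) * (a + t ^ (2 : ℝ))⁻¹)
      = (a + t ^ 2)⁻¹ := by
  have h : (t ^ (2 : ℝ)) ^ (-(1 : ℝ) / 2) = t⁻¹ := by
    rw [← rpow_mul ht.le]; norm_num [rpow_neg_one]
  rw [h, rpow_two, smul_eq_mul]
  norm_num
  field_simp

lemma integrableOn_Ioi_rpow_neg_half_mul_inv_add (ha : 0 < a) :
    IntegrableOn (fun x : ℝ => x ^ (-(1 : ℝ) / 2) * (a + x)⁻¹) (Ioi 0) := by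
  refine (integrableOn_Ioi_comp_rpow_iff' _ two_ne_zero).1 ?_
  exact (integrableOn_Ioi_inv_add_sq ha).congr_fun
    (fun t ht => (rpow_neg_half_mul_inv_add_comp_sq ht).symm) measurableSet_Ioi

lemma integral_Ioi_rpow_neg_half_mul_inv_add (ha : 0 < a) :
    ∫ x in Ioi (0 : ℝ), x ^ (-(1 : ℝ) / 2) * (a + x)⁻¹ = π / √a := by
  rw [← integral_comp_rpow_Ioi_of_pos zero_lt_two,
    setIntegral_congr_fun measurableSet_Ioi fun t ht => by
      rw [mul_smul, rpow_neg_half_mul_inv_add_comp_sq ht],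
    integral_smul, integral_Ioi_inv_add_sq ha, smul_eq_mul]
  have : 0 < √a := sqrt_pos.2 ha
  field_simp

end Scalar

namespace Matrix

variable {ι : Type*} [Fintype ι] [DecidableEq ι] {A : Matrix ι ι ℝ}

lemma IsHermitian.cfc_apply_eq_sum (hA : A.IsHermitian) (f : ℝ → ℝ) (i j : ι) :
    cfc f A i j = ∑ k, f (hA.eigenvalues k) *
      ((hA.eigenvectorUnitary : Matrix ι ι ℝ) i k *
        (hA.eigenvectorUnitary : Matrix ι ι ℝ) j k) := by
  rw [hA.cfc_eq, IsHermitian.cfc, Unitary.conjStarAlgAut_apply, mul_apply]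
  refine Finset.sum_congr rfl fun k _ => ?_
  simp only [mul_diagonal, star_apply, star_trivial, Function.comp_apply,
    RCLike.ofReal_real_eq_id, id]
  ring

variable {X : Type*} [MeasurableSpace X] {μ : Measure X} {f : X → ℝ → ℝ}

lemma IsHermitian.integrable_cfc_apply (hA : A.IsHermitian)
    (hf : ∀ t ∈ spectrum ℝ A, Integrable (f · t) μ) (i j : ι) :
    Integrable (fun x => cfc (f x) A i j) μ := by
  simp_rw [hA.cfc_apply_eq_sum]
  exact integrable_finsetSum _ fun k _ =>
    (hf _ (hA.eigenvalues_mem_spectrum_real k)).mul_const _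

lemma IsHermitian.integral_cfc_apply (hA : A.IsHermitian)
    (hf : ∀ t ∈ spectrum ℝ A, Integrable (f · t) μ) (i j : ι) :
    ∫ x, cfc (f x) A i j ∂μ = cfc (fun t => ∫ x, f x t ∂μ) A i j := by
  simp_rw [hA.cfc_apply_eq_sum]
  rw [integral_finsetSum _ fun k _ => (hf _ (hA.eigenvalues_mem_spectrum_real k)).mul_const _]
  simp_rw [integral_mul_const]

lemma IsHermitian.inv_add_smul_one_eq_cfc (hA : A.IsHermitian) {x : ℝ}
    (hx : -x ∉ spectrum ℝ A) :
    (A + x • 1)⁻¹ = cfc (fun t => (t + x)⁻¹) A := by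
  have hcont := fun g : ℝ → ℝ => A.finite_spectrum.continuousOn g
  have hshift : A + x • 1 = cfc (fun t => t + x) A := by
    rw [cfc_add_const x (fun t => t) A (hcont _), cfc_id' ℝ A, Algebra.algebraMap_eq_smul_one]
  apply inv_eq_left_inv
  rw [hshift, ← cfc_mul _ _ A (hcont _) (hcont _), ← cfc_one ℝ A]
  exact cfc_congr fun t ht =>
    inv_mul_cancel₀ fun h => hx (by rwa [← eq_neg_of_add_eq_zero_left h])

lemma PosDef.posDef_cfc_inv_sqrt (hA : A.PosDef) : (cfc (fun t => (√t)⁻¹) A).PosDef :=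
  IsStrictlyPositive.posDef <|
    (cfc_isStrictlyPositive_iff _ A (A.finite_spectrum.continuousOn _)).2 fun _ ht =>
      inv_pos.2 (sqrt_pos.2 (hA.isStrictlyPositive.spectrum_pos ht))

lemma PosDef.cfc_inv_sqrt_mul_self_mul_cfc_inv_sqrt (hA : A.PosDef) :
    cfc (fun t => (√t)⁻¹) A * A * cfc (fun t => (√t)⁻¹) A = 1 := by
  have hcont := fun g : ℝ → ℝ => A.finite_spectrum.continuousOn g
  nth_rw 2 [← cfc_id' ℝ A]
  rw [← cfc_mul _ _ A (hcont _) (hcont _), ← cfc_mul _ _ A (hcont _) (hcont _), ← cfc_one ℝ A]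
  refine cfc_congr fun t ht => ?_
  have := hA.isStrictlyPositive.spectrum_pos ht
  have hs : (√t) ^ 2 = t := sq_sqrt this.le
  have : 0 < √t := sqrt_pos.2 this
  simp only [Pi.one_apply]
  field_simp
  rw [hs]

end Matrix

/-- For a real symmetric positive definite matrix `M`, the function
`x ↦ x^{-1/2}(M + xI)⁻¹` is (entrywise) integrable on `(0,∞)`, and
`T = (1/π) ∫₀^∞ x^{-1/2}(M + xI)⁻¹ dx` is symmetric positive definite with `T·M·T = I`,
i.e. `T` is the inverse of the positive square root of `M`. -/
theorem inverse_sqrt_integral_representation (n : ℕ) (M : Matrix (Fin n) (Fin n) ℝ)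
    (hM : M.PosDef) :
    (∀ i j : Fin n, IntegrableOn
        (fun x : ℝ => x ^ (-(1 : ℝ) / 2) * ((M + x • 1)⁻¹ i j)) (Set.Ioi 0)) ∧
    (sqrtInvIntegral n M).IsSymm ∧ (sqrtInvIntegral n M).PosDef ∧
    sqrtInvIntegral n M * M * sqrtInvIntegral n M = 1 := by
  have hspec : ∀ t ∈ spectrum ℝ M, 0 < t := fun _ ht => hM.isStrictlyPositive.spectrum_pos ht
  have hres : ∀ i j, ∀ x ∈ Ioi (0 : ℝ), x ^ (-(1 : ℝ) / 2) * (M + x • 1)⁻¹ i j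
      = cfc (fun t => x ^ (-(1 : ℝ) / 2) * (t + x)⁻¹) M i j := fun i j x hx => by
    rw [hM.isHermitian.inv_add_smul_one_eq_cfc fun h => (hspec _ h).not_gt (neg_neg_of_pos hx),
      cfc_const_mul _ _ M (M.finite_spectrum.continuousOn _), Matrix.smul_apply, smul_eq_mul]
  have hint : ∀ t ∈ spectrum ℝ M, IntegrableOn (fun x : ℝ => x ^ (-(1 : ℝ) / 2) * (t + x)⁻¹)
      (Ioi 0) := fun t ht => integrableOn_Ioi_rpow_neg_half_mul_inv_add (hspec t ht)
  have hval : EqOn (fun t => 1 / π * ∫ x in Ioi (0 : ℝ), x ^ (-(1 : ℝ) / 2) * (t + x)⁻¹)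
      (fun t => (√t)⁻¹) (spectrum ℝ M) := fun t ht => by
    simp only [integral_Ioi_rpow_neg_half_mul_inv_add (hspec t ht)]
    field_simp
  have hT : sqrtInvIntegral n M = cfc (fun t => (√t)⁻¹) M := by
    ext i j
    rw [sqrtInvIntegral, Matrix.of_apply, setIntegral_congr_fun measurableSet_Ioi (hres i j),
      hM.isHermitian.integral_cfc_apply hint, ← smul_eq_mul, ← Matrix.smul_apply,
      ← cfc_const_mul _ _ M (M.finite_spectrum.continuousOn _), cfc_congr hval]
  refine ⟨fun i j => IntegrableOn.congr_fun (hM.isHermitian.integrable_cfc_apply hint i j)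
    (fun x hx => (hres i j x hx).symm) measurableSet_Ioi, ?_, ?_, ?_⟩ <;> rw [hT]
  · exact Matrix.isHermitian_iff_isSymm.1 (cfc_predicate _ M)
  · exact hM.posDef_cfc_inv_sqrt
  · exact hM.cfc_inv_sqrt_mul_self_mul_cfc_inv_sqrt
end
end
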